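/- arXiv:2510.20675 — 4 statements merged into one kernel-verified Lean document; each statement's English description precedes it below -/
import Mathlib

section
/- Let L ∈ C^{n×n} and let P ∈ C^{n×n} be a projector (P^2 = P), Q = I − P. Then for every x_0 ∈ C^n and t ≥ 0, the trajectory x_t = e^{Lt} x_0 satisfies Q x_t = e^{QLQ t} Q x_0 + ∫_0^t e^{QLQ s} Q L P x_{t−s} ds. -/
open Matrix intervalIntegral

attribute [local instance] Matrix.linftyOpNormedRing Matrix.linftyOpNormedAlgebra

/-!
Duhamel's formula: `X(t) = Q e^{tL}` solves `X' = X L = (QLQ) X + (X L - QLQ X)`, and the forcing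
term is `(QL - QLQ Q) e^{tL} = QLP e^{tL}` since `Q² = Q`. The variation-of-constants identity
itself is the fundamental theorem of calculus for `s ↦ e^{sA} C e^{(t-s)B}`.
-/

section VariationOfConstants

open NormedSpace

variable {𝔸 : Type*} [NormedRing 𝔸] [NormedAlgebra ℝ 𝔸] [CompleteSpace 𝔸]

theorem hasDerivAt_exp_smul_mul_mul_exp_sub_smul (A B C : 𝔸) (t s : ℝ) :
    HasDerivAt (fun u : ℝ => exp (u • A) * C * exp ((t - u) • B))
      (exp (s • A) * (A * C - C * B) * exp ((t - s) • B)) s := by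
  have hB : HasDerivAt (fun u : ℝ => exp ((t - u) • B)) (-(B * exp ((t - s) • B))) s := by
    have := (hasDerivAt_exp_smul_const' B (t - s)).scomp s ((hasDerivAt_id s).const_sub t)
    rwa [neg_one_smul] at this
  exact (((hasDerivAt_exp_smul_const A s).mul_const C).mul hB).congr_deriv (by noncomm_ring)

theorem continuous_exp_smul_mul_mul_exp_sub_smul (A B C : 𝔸) (t : ℝ) :
    Continuous fun s : ℝ => exp (s • A) * C * exp ((t - s) • B) :=
  ((differentiable_exp_smul_const ℝ A).continuous.mul continuous_const).mul
    ((differentiable_exp_smul_const ℝ B).continuous.comp (continuous_sub_left t))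

theorem mul_exp_smul_eq_exp_smul_mul_add_integral (A B C : 𝔸) (t : ℝ) :
    C * exp (t • B) =
      exp (t • A) * C + ∫ s in (0 : ℝ)..t, exp (s • A) * (C * B - A * C) * exp ((t - s) • B) := by
  have hFTC := integral_eq_sub_of_hasDerivAt
    (fun s _ => hasDerivAt_exp_smul_mul_mul_exp_sub_smul A B C t s)
    ((continuous_exp_smul_mul_mul_exp_sub_smul A B (A * C - C * B) t).intervalIntegrable 0 t)
  have hneg (s : ℝ) : exp (s • A) * (C * B - A * C) * exp ((t - s) • B) =
      -(exp (s • A) * (A * C - C * B) * exp ((t - s) • B)) := by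
    noncomm_ring
  simp only [hneg, integral_neg, hFTC, sub_self, zero_smul, exp_zero, one_mul, mul_one, sub_zero]
  abel

end VariationOfConstants

theorem Matrix.intervalIntegral_mulVec {ι 𝕜 : Type*} [Fintype ι] [DecidableEq ι] [RCLike 𝕜]
    {M : ℝ → Matrix ι ι 𝕜} (hM : Continuous M) (a b : ℝ) (v : ι → 𝕜) :
    (∫ s in a..b, M s) *ᵥ v = ∫ s in a..b, M s *ᵥ v :=
  ((LinearMap.toContinuousLinearMap ((mulVecBilin ℝ ℝ).flip v)).intervalIntegral_comp_comm
    (hM.intervalIntegrable a b)).symm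

theorem nakajima_zwanzig_Q_part_general (n : ℕ)
    (L P : Matrix (Fin n) (Fin n) ℂ) (hP : P * P = P)
    (Q : Matrix (Fin n) (Fin n) ℂ) (hQ : Q = 1 - P)
    (x₀ : Fin n → ℂ) (t : ℝ) :
    Q.mulVec ((NormedSpace.exp (t • L)).mulVec x₀) =
      (NormedSpace.exp (t • (Q * L * Q))).mulVec (Q.mulVec x₀) +
      ∫ s in (0 : ℝ)..t,
        (NormedSpace.exp (s • (Q * L * Q))).mulVec
          ((Q * L * P).mulVec ((NormedSpace.exp ((t - s) • L)).mulVec x₀)) := by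
  have hQQ : Q * Q = Q := by
    rw [hQ, mul_sub, sub_mul, sub_mul, one_mul, one_mul, mul_one, hP, sub_self, sub_zero]
  have hforcing : Q * L - Q * L * Q * Q = Q * L * P := by
    rw [mul_assoc _ Q Q, hQQ, hQ]; noncomm_ring
  have hflow : Q * NormedSpace.exp (t • L) = NormedSpace.exp (t • (Q * L * Q)) * Q +
      ∫ s in (0 : ℝ)..t,
        NormedSpace.exp (s • (Q * L * Q)) * (Q * L * P) * NormedSpace.exp ((t - s) • L) := by
    rw [← hforcing]
    exact mul_exp_smul_eq_exp_smul_mul_add_integral _ _ _ t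
  rw [mulVec_mulVec, hflow, add_mulVec,
    intervalIntegral_mulVec (continuous_exp_smul_mul_mul_exp_sub_smul _ _ _ t)]
  simp only [mulVec_mulVec, mul_assoc]

/-- For a projector `P` (`Q = 1 - P`) and the trajectory
`x_t = e^{Lt} x_0`, one has
`Q x_t = e^{QLQ t} Q x_0 + ∫_0^t e^{QLQ s} Q L P x_{t−s} ds`. -/
theorem nakajima_zwanzig_Q_part (n : ℕ)
    (L P : Matrix (Fin n) (Fin n) ℂ) (hP : P * P = P)
    (Q : Matrix (Fin n) (Fin n) ℂ) (hQ : Q = 1 - P)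
    (x₀ : Fin n → ℂ) (t : ℝ) (ht : 0 ≤ t) :
    Q.mulVec ((NormedSpace.exp (t • L)).mulVec x₀) =
      (NormedSpace.exp (t • (Q * L * Q))).mulVec (Q.mulVec x₀) +
      ∫ s in (0 : ℝ)..t,
        (NormedSpace.exp (s • (Q * L * Q))).mulVec
          ((Q * L * P).mulVec ((NormedSpace.exp ((t - s) • L)).mulVec x₀)) :=
  nakajima_zwanzig_Q_part_general n L P hP Q hQ x₀ t
end

section
/- Let L ∈ C^{n×n}, let P be a projector with Q = I − P, and define M_t = I − ∫_0^t e^{QLQ s} Q L P e^{−L s} ds. If M_t is invertible and x_0 satisfies P x_0 = x_0, then the projected trajectory satisfies the time-local equation d/dt (P e^{Lt} x_0) = P L M_t^{-1} P (e^{Lt} x_0). -/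
/-!
Write `Q = 1 - P`. Since `QLQ · Q - Q · L = -QLP`, the integrand defining `M_t` is minus the
derivative of `s ↦ e^{sQLQ} Q e^{-sL}`, so `M_t = P + e^{tQLQ} Q e^{-tL}`. As `Q x₀ = 0`, this
gives `M_t e^{tL} x₀ = P e^{tL} x₀`, hence `P L M_t⁻¹ P e^{tL} x₀ = P L e^{tL} x₀`, which is the
derivative of `P e^{tL} x₀`.
-/

open Matrix intervalIntegral

attribute [local instance] Matrix.linftyOpNormedRing Matrix.linftyOpNormedAlgebra

open NormedSpace

section BanachAlgebra

variable {𝔸 : Type*} [NormedRing 𝔸] [NormedAlgebra ℝ 𝔸] [CompleteSpace 𝔸]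

theorem exp_neg_mul_exp (x : 𝔸) : exp (-x) * exp x = 1 := by
  have hball : ∀ y : 𝔸, y ∈ Metric.eball (0 : 𝔸) (expSeries ℝ 𝔸).radius := fun y => by
    simp [expSeries_radius_eq_top]
  rw [← exp_add_of_commute_of_mem_ball (Commute.refl x).neg_left (hball _) (hball _),
    neg_add_cancel, exp_zero]

theorem hasDerivAt_exp_smul_mul_mul_exp_neg_smul (A B C : 𝔸) (s : ℝ) :
    HasDerivAt (fun u : ℝ => exp (u • A) * B * exp (-(u • C)))
      (exp (s • A) * (A * B - B * C) * exp (-(s • C))) s := by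
  have hneg : HasDerivAt (fun u : ℝ => exp (-(u • C))) (-C * exp (-(s • C))) s := by
    simpa only [smul_neg] using hasDerivAt_exp_smul_const' (-C) s
  exact (((hasDerivAt_exp_smul_const A s).mul_const B).mul hneg).congr_deriv (by noncomm_ring)

theorem continuous_exp_smul_mul_mul_exp_neg_smul (A B C : 𝔸) :
    Continuous fun s : ℝ => exp (s • A) * B * exp (-(s • C)) :=
  continuous_iff_continuousAt.2 fun s =>
    (hasDerivAt_exp_smul_mul_mul_exp_neg_smul A B C s).continuousAt

theorem integral_exp_smul_mul_sub_mul_mul_exp_neg_smul (A B C : 𝔸) (a b : ℝ) :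
    ∫ s in a..b, exp (s • A) * (A * B - B * C) * exp (-(s • C)) =
      exp (b • A) * B * exp (-(b • C)) - exp (a • A) * B * exp (-(a • C)) :=
  integral_eq_sub_of_hasDerivAt (fun s _ => hasDerivAt_exp_smul_mul_mul_exp_neg_smul A B C s)
    ((continuous_exp_smul_mul_mul_exp_neg_smul A _ C).intervalIntegrable a b)

theorem one_sub_integral_exp_orthogonal_dynamics {P : 𝔸} (hP : IsIdempotentElem P) (L : 𝔸)
    (t : ℝ) :
    1 - ∫ s in (0 : ℝ)..t,
        exp (s • ((1 - P) * L * (1 - P))) * ((1 - P) * L * P) * exp (-(s • L)) =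
      P + exp (t • ((1 - P) * L * (1 - P))) * (1 - P) * exp (-(t • L)) := by
  have hQLP : (1 - P) * L * P = -((1 - P) * L * (1 - P) * (1 - P) - (1 - P) * L) := by
    rw [mul_assoc _ (1 - P), hP.one_sub.eq]
    noncomm_ring
  simp only [hQLP, mul_neg, neg_mul, integral_neg,
    integral_exp_smul_mul_sub_mul_mul_exp_neg_smul, zero_smul, neg_zero, exp_zero]
  noncomm_ring

end BanachAlgebra

section Matrix

variable {m 𝕜 : Type*} [Fintype m] [DecidableEq m] [RCLike 𝕜]

theorem HasDerivAt.mulVec_apply {F : ℝ → Matrix m m 𝕜} {F' : Matrix m m 𝕜} {t : ℝ}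
    (hF : HasDerivAt F F' t) (x : m → 𝕜) (i : m) :
    HasDerivAt (fun u => (F u *ᵥ x) i) ((F' *ᵥ x) i) t := by
  let φ : Matrix m m 𝕜 →ₗ[ℝ] 𝕜 :=
    { toFun := fun A => (A *ᵥ x) i
      map_add' := fun A B => by simp [add_mulVec]
      map_smul' := fun r A => by simp [smul_mulVec] }
  exact (LinearMap.toContinuousLinearMap φ).hasFDerivAt.comp_hasDerivAt t hF

theorem add_mul_one_sub_mul_exp_neg_smul_mulVec {P : Matrix m m 𝕜} {x : m → 𝕜} (hx : P *ᵥ x = x)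
    (B L : Matrix m m 𝕜) (t : ℝ) :
    (P + B * (1 - P) * exp (-(t • L))) *ᵥ (exp (t • L) *ᵥ x) = P *ᵥ (exp (t • L) *ᵥ x) := by
  have hQx : (1 - P) *ᵥ x = 0 := by rw [sub_mulVec, one_mulVec, hx, sub_self]
  -- stated at type `Matrix` so that `rw` matches `Matrix`'s own `*`, not the normed-ring one
  have hexp : exp (-(t • L)) * exp (t • L) = (1 : Matrix m m 𝕜) := exp_neg_mul_exp _
  rw [add_mulVec, ← mulVec_mulVec, mulVec_mulVec _ (exp _), hexp, one_mulVec,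
    ← mulVec_mulVec, hQx, mulVec_zero, add_zero]

end Matrix

/-- With `M_t = I − ∫_0^t e^{QLQ s} Q L P e^{−L s} ds`, if `M_t` is
invertible and `P x_0 = x_0`, then
`d/dt (P e^{Lt} x_0) = P L M_t^{-1} P (e^{Lt} x_0)`. -/
theorem time_local_projected_equation (n : ℕ)
    (L P : Matrix (Fin n) (Fin n) ℂ) (hP : P * P = P)
    (Q : Matrix (Fin n) (Fin n) ℂ) (hQ : Q = 1 - P)
    (M : ℝ → Matrix (Fin n) (Fin n) ℂ)
    (hM : ∀ t : ℝ, M t = 1 - ∫ s in (0 : ℝ)..t,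
      NormedSpace.exp (s • (Q * L * Q)) * (Q * L * P) * NormedSpace.exp (-(s • L)))
    (x₀ : Fin n → ℂ) (hx₀ : P.mulVec x₀ = x₀)
    (t : ℝ) (hMt : IsUnit (M t)) :
    ∀ i, HasDerivAt
      (fun u : ℝ => (P.mulVec ((NormedSpace.exp (u • L)).mulVec x₀)) i)
      (((P * L * (M t)⁻¹ * P).mulVec ((NormedSpace.exp (t • L)).mulVec x₀)) i) t := by
  intro i
  subst hQ
  have hMx : M t *ᵥ (exp (t • L) *ᵥ x₀) = P *ᵥ (exp (t • L) *ᵥ x₀) := by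
    have hMt_eq : M t = P + exp (t • ((1 - P) * L * (1 - P))) * (1 - P) * exp (-(t • L)) :=
      (hM t).trans (one_sub_integral_exp_orthogonal_dynamics hP L t)
    rw [hMt_eq, add_mul_one_sub_mul_exp_neg_smul_mulVec hx₀]
  have hMinv : (M t)⁻¹ *ᵥ (P *ᵥ (exp (t • L) *ᵥ x₀)) = exp (t • L) *ᵥ x₀ := by
    rw [← hMx, mulVec_mulVec, nonsing_inv_mul _ ((isUnit_iff_isUnit_det _).1 hMt), one_mulVec]
  have hderiv := ((hasDerivAt_exp_smul_const' L t).const_mul P).mulVec_apply x₀ i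
  simp only [← mulVec_mulVec] at hderiv ⊢
  rwa [hMinv]
end

section
/- With the bipartite setup H = Σ_k S_k ⊗ E_k, τ a density operator on the environment, R = tr_E, J(μ) = μ ⊗ τ, L(ρ) = −i[H,ρ]: the second-order coefficient F_{(2)} = R L^2 J − (R L J)^2 equals μ ↦ Σ_{j,k} χ_{j,k} (2 S_j μ S_k − {S_k S_j, μ}), where χ_{j,k} = tr(E_j τ E_k) − tr(τ E_j) tr(τ E_k). -/
/-!
Tracing out the environment turns each factor `E_k` into a trace against `τ`. With
`H = ∑ S_k ⊗ E_k`, both `tr_E [H, [H, μ ⊗ τ]]` and `tr_E [H, tr_E [H, μ ⊗ τ] ⊗ τ]`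
equal `-D_w μ`, where `D_w μ = ∑ w_{jk} (2 S_j μ S_k - {S_k S_j, μ})` and `w_{jk}` is
`tr(E_j τ E_k)`, resp. `tr(τ E_j) tr(τ E_k)`: this uses only cyclicity of the trace and the
swap `j ↔ k` in half of the terms. The two factors `-i` contribute `-1`, and `D_w` is linear
in `w`, so the difference is `D_χ`.
-/

open Matrix Kronecker

/-- Partial trace over the second (environment) tensor factor. -/
noncomputable def ptraceE {dS dE : ℕ} (ρ : Matrix (Fin dS × Fin dE) (Fin dS × Fin dE) ℂ) :
    Matrix (Fin dS) (Fin dS) ℂ :=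
  Matrix.of fun i j => ∑ e : Fin dE, ρ (i, e) (j, e)

section Dissipator

variable {ι n R : Type*} [Fintype ι] [Fintype n] [CommRing R]

def dissipator (S : ι → Matrix n n R) (w : ι → ι → R) (μ : Matrix n n R) : Matrix n n R :=
  ∑ j, ∑ k, w j k • ((2 : R) • (S j * μ * S k) - (S k * S j * μ + μ * (S k * S j)))

theorem dissipator_sub (S : ι → Matrix n n R) (w w' : ι → ι → R) (μ : Matrix n n R) :
    dissipator S (w - w') μ = dissipator S w μ - dissipator S w' μ := by
  simp only [dissipator, Pi.sub_apply, sub_smul, Finset.sum_sub_distrib]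

theorem neg_dissipator_eq_sum (S : ι → Matrix n n R) (w : ι → ι → R) (μ : Matrix n n R) :
    -dissipator S w μ = ∑ j, ∑ k, (w k j • (S j * S k * μ - S k * μ * S j)
      - w j k • (S j * μ * S k - μ * S k * S j)) := by
  have hswap : ∑ j, ∑ k, w k j • (S j * S k * μ - S k * μ * S j)
      = ∑ j, ∑ k, w j k • (S k * S j * μ - S j * μ * S k) := by
    rw [Finset.sum_comm]
  simp only [Finset.sum_sub_distrib]
  rw [hswap]
  simp only [dissipator, ← Finset.sum_sub_distrib, ← Finset.sum_neg_distrib]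
  refine Finset.sum_congr rfl fun j _ => Finset.sum_congr rfl fun k _ => ?_
  simp only [mul_assoc]
  module

end Dissipator

theorem mul_sum_sub_sum_mul {ι A : Type*} [Ring A] (s : Finset ι) (a : A) (f : ι → A) :
    a * ∑ k ∈ s, f k - (∑ k ∈ s, f k) * a = ∑ k ∈ s, (a * f k - f k * a) := by
  rw [Finset.mul_sum, Finset.sum_mul, Finset.sum_sub_distrib]

theorem sum_kronecker_commutator_kronecker {ι R l m : Type*} [Fintype ι] [CommRing R]
    [Fintype l] [Fintype m] (S : ι → Matrix l l R) (E : ι → Matrix m m R)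
    (X : Matrix l l R) (Y : Matrix m m R) :
    (∑ k, S k ⊗ₖ E k) * (X ⊗ₖ Y) - (X ⊗ₖ Y) * (∑ k, S k ⊗ₖ E k)
      = ∑ k, ((S k * X) ⊗ₖ (E k * Y) - (X * S k) ⊗ₖ (Y * E k)) := by
  simp only [Finset.sum_mul, Finset.mul_sum, ← Finset.sum_sub_distrib, mul_kronecker_mul]

section PartialTrace

variable {dS dE : ℕ}

theorem ptraceE_sub (A B : Matrix (Fin dS × Fin dE) (Fin dS × Fin dE) ℂ) :
    ptraceE (A - B) = ptraceE A - ptraceE B := by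
  ext i j
  simp [ptraceE, Finset.sum_sub_distrib]

theorem ptraceE_smul (c : ℂ) (A : Matrix (Fin dS × Fin dE) (Fin dS × Fin dE) ℂ) :
    ptraceE (c • A) = c • ptraceE A := by
  ext i j
  simp [ptraceE, Finset.mul_sum]

theorem ptraceE_sum {ι : Type*} (s : Finset ι)
    (f : ι → Matrix (Fin dS × Fin dE) (Fin dS × Fin dE) ℂ) :
    ptraceE (∑ k ∈ s, f k) = ∑ k ∈ s, ptraceE (f k) := by
  ext i j
  simp only [ptraceE, of_apply, Matrix.sum_apply]
  exact Finset.sum_comm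

theorem ptraceE_kronecker (A : Matrix (Fin dS) (Fin dS) ℂ) (B : Matrix (Fin dE) (Fin dE) ℂ) :
    ptraceE (A ⊗ₖ B) = B.trace • A := by
  ext i j
  simp only [ptraceE, of_apply, kroneckerMap_apply, Matrix.smul_apply, smul_eq_mul, trace, diag,
    Finset.sum_mul, mul_comm (A i j)]

variable {ι : Type*} [Fintype ι] (S : ι → Matrix (Fin dS) (Fin dS) ℂ)
  (E : ι → Matrix (Fin dE) (Fin dE) ℂ)

theorem ptraceE_commutator_kronecker (X : Matrix (Fin dS) (Fin dS) ℂ)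
    (Y : Matrix (Fin dE) (Fin dE) ℂ) :
    ptraceE ((∑ k, S k ⊗ₖ E k) * (X ⊗ₖ Y) - (X ⊗ₖ Y) * (∑ k, S k ⊗ₖ E k))
      = ∑ k, ((E k * Y).trace • (S k * X) - (Y * E k).trace • (X * S k)) := by
  simp only [sum_kronecker_commutator_kronecker, ptraceE_sum, ptraceE_sub, ptraceE_kronecker]

variable {H : Matrix (Fin dS × Fin dE) (Fin dS × Fin dE) ℂ}

theorem ptraceE_commutator_commutator_kronecker (hH : H = ∑ k, S k ⊗ₖ E k)
    (X : Matrix (Fin dS) (Fin dS) ℂ) (Y : Matrix (Fin dE) (Fin dE) ℂ) :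
    ptraceE (H * (H * (X ⊗ₖ Y) - (X ⊗ₖ Y) * H) - (H * (X ⊗ₖ Y) - (X ⊗ₖ Y) * H) * H)
      = -dissipator S (fun j k => (E j * Y * E k).trace) X := by
  have hinner : H * (X ⊗ₖ Y) - (X ⊗ₖ Y) * H
      = ∑ k, ((S k * X) ⊗ₖ (E k * Y) - (X * S k) ⊗ₖ (Y * E k)) := by
    rw [hH, sum_kronecker_commutator_kronecker]
  rw [neg_dissipator_eq_sum, Finset.sum_comm, hinner, mul_sum_sub_sum_mul, ptraceE_sum]
  refine Finset.sum_congr rfl fun k _ => ?_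
  rw [mul_sub, sub_mul, sub_sub_sub_comm, ptraceE_sub, hH, ptraceE_commutator_kronecker,
    ptraceE_commutator_kronecker, ← Finset.sum_sub_distrib]
  refine Finset.sum_congr rfl fun j _ => ?_
  rw [trace_mul_comm (E k * Y) (E j), trace_mul_comm (Y * E k) (E j)]
  simp only [mul_assoc]
  module

theorem ptraceE_commutator_ptraceE_commutator_kronecker (hH : H = ∑ k, S k ⊗ₖ E k)
    (X : Matrix (Fin dS) (Fin dS) ℂ) (Y : Matrix (Fin dE) (Fin dE) ℂ) :
    ptraceE (H * (ptraceE (H * (X ⊗ₖ Y) - (X ⊗ₖ Y) * H) ⊗ₖ Y)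
        - (ptraceE (H * (X ⊗ₖ Y) - (X ⊗ₖ Y) * H) ⊗ₖ Y) * H)
      = -dissipator S (fun j k => (Y * E j).trace * (Y * E k).trace) X := by
  rw [neg_dissipator_eq_sum, hH, ptraceE_commutator_kronecker, ptraceE_commutator_kronecker]
  refine Finset.sum_congr rfl fun j _ => ?_
  rw [trace_mul_comm (E j) Y, Finset.mul_sum, Finset.sum_mul, Finset.smul_sum, Finset.smul_sum,
    ← Finset.sum_sub_distrib]
  refine Finset.sum_congr rfl fun k _ => ?_
  rw [trace_mul_comm (E k) Y]
  simp only [mul_sub, sub_mul, Matrix.mul_smul, Matrix.smul_mul, mul_assoc]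
  module

end PartialTrace

open scoped ComplexOrder in
theorem second_order_coefficient_bipartite_general (dS dE r : ℕ)
    (S : Fin r → Matrix (Fin dS) (Fin dS) ℂ)
    (E : Fin r → Matrix (Fin dE) (Fin dE) ℂ)
    (H : Matrix (Fin dS × Fin dE) (Fin dS × Fin dE) ℂ)
    (hH : H = ∑ k : Fin r, (S k) ⊗ₖ (E k))
    (τ : Matrix (Fin dE) (Fin dE) ℂ)
    (Lop : Matrix (Fin dS × Fin dE) (Fin dS × Fin dE) ℂ →
           Matrix (Fin dS × Fin dE) (Fin dS × Fin dE) ℂ)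
    (hLop : ∀ ρ, Lop ρ = (-Complex.I) • (H * ρ - ρ * H))
    (χ : Fin r → Fin r → ℂ)
    (hχ : ∀ j k, χ j k = (E j * τ * E k).trace - (τ * E j).trace * (τ * E k).trace) :
    ∀ μ : Matrix (Fin dS) (Fin dS) ℂ,
      ptraceE (Lop (Lop (μ ⊗ₖ τ))) - ptraceE (Lop ((ptraceE (Lop (μ ⊗ₖ τ))) ⊗ₖ τ)) =
        ∑ j : Fin r, ∑ k : Fin r, χ j k •
          ((2 : ℂ) • (S j * μ * S k) - (S k * S j * μ + μ * (S k * S j))) := by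
  intro μ
  have hχ_eq : χ = (fun j k => (E j * τ * E k).trace)
      - fun j k => (τ * E j).trace * (τ * E k).trace := funext₂ hχ
  have hI : (-Complex.I) * (-Complex.I) = -1 := by rw [neg_mul_neg, Complex.I_mul_I]
  simp only [hLop, Matrix.mul_smul, Matrix.smul_mul, ← smul_sub, smul_kronecker, ptraceE_smul,
    smul_smul, hI]
  rw [ptraceE_commutator_commutator_kronecker S E hH,
    ptraceE_commutator_ptraceE_commutator_kronecker S E hH,
    neg_one_smul, neg_sub, neg_sub_neg, ← dissipator_sub, ← hχ_eq, dissipator]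

open scoped ComplexOrder in
/-- In the bipartite setup with `H = ∑_k S_k ⊗ E_k`, `R = tr_E`,
`J(μ) = μ ⊗ τ` and `L(ρ) = −i[H,ρ]`, the second-order coefficient
`F_{(2)} = R L² J − (R L J)²` equals
`μ ↦ ∑_{j,k} χ_{j,k} (2 S_j μ S_k − {S_k S_j, μ})` with
`χ_{j,k} = tr(E_j τ E_k) − tr(τ E_j) tr(τ E_k)`. -/
theorem second_order_coefficient_bipartite (dS dE r : ℕ)
    (S : Fin r → Matrix (Fin dS) (Fin dS) ℂ) (hS : ∀ k, (S k).IsHermitian)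
    (E : Fin r → Matrix (Fin dE) (Fin dE) ℂ) (hE : ∀ k, (E k).IsHermitian)
    (H : Matrix (Fin dS × Fin dE) (Fin dS × Fin dE) ℂ)
    (hH : H = ∑ k : Fin r, (S k) ⊗ₖ (E k))
    (τ : Matrix (Fin dE) (Fin dE) ℂ) (hτ : τ.PosSemidef) (hτtr : τ.trace = 1)
    (Lop : Matrix (Fin dS × Fin dE) (Fin dS × Fin dE) ℂ →
           Matrix (Fin dS × Fin dE) (Fin dS × Fin dE) ℂ)
    (hLop : ∀ ρ, Lop ρ = (-Complex.I) • (H * ρ - ρ * H))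
    (χ : Fin r → Fin r → ℂ)
    (hχ : ∀ j k, χ j k = (E j * τ * E k).trace - (τ * E j).trace * (τ * E k).trace) :
    ∀ μ : Matrix (Fin dS) (Fin dS) ℂ,
      ptraceE (Lop (Lop (μ ⊗ₖ τ))) - ptraceE (Lop ((ptraceE (Lop (μ ⊗ₖ τ))) ⊗ₖ τ)) =
        ∑ j : Fin r, ∑ k : Fin r, χ j k •
          ((2 : ℂ) • (S j * μ * S k) - (S k * S j * μ + μ * (S k * S j))) :=
  second_order_coefficient_bipartite_general dS dE r S E H hH τ Lop hLop χ hχ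
end

section
/- With F_{(k)} defined by the recursion F_{(k)} = k·(R L^k J)/k! − Σ_{h=1}^{k-1} F_{(k-h)} (R L^h J)/h! (R J = I_m), for any N the truncated exponential series satisfies Σ_{k=0}^{N} (t^k/k!) R L^k J = Σ_{k=0}^{N} t^k E_{(k)}, where E_{(k)} is defined via E_{(0)} = I, E_{(k)} = (1/k) Σ_{s=1}^{k} F_{(s)} E_{(k-s)}. In other words, the Taylor coefficients of R e^{Lt} J up to order N are matched exactly by the recursion. -/
open Matrix Finset

/-! The recursion for `F` says `∑_{s=1}^k F_s c_{k-s} = k c_k` for `c_k = R L^k J / k!`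
(using `c_0 = R J = 1`), which is exactly the recursion defining `E`; so `E_k = c_k` by strong
induction, and the two truncated series agree term by term. -/

section NewtonRecursion

variable {𝕜 A : Type*} [Ring A]

theorem sum_Icc_mul_eq_of_eq_sub_sum [Semiring 𝕜] [Module 𝕜 A] {F c : ℕ → A}
    (hc0 : c 0 = 1)
    (hF : ∀ k, 1 ≤ k → F k = (k : 𝕜) • c k - ∑ h ∈ Icc 1 (k - 1), F (k - h) * c h)
    {k : ℕ} (hk : 1 ≤ k) :
    ∑ s ∈ Icc 1 k, F s * c (k - s) = (k : 𝕜) • c k := by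
  obtain ⟨j, rfl⟩ : ∃ j, k = j + 1 := ⟨k - 1, by omega⟩
  have hreflect : ∑ s ∈ Icc 1 j, F s * c (j + 1 - s) = ∑ h ∈ Icc 1 j, F (j + 1 - h) * c h :=
    sum_nbij' (fun s => j + 1 - s) (fun h => j + 1 - h)
      (fun s hs => by simp only [mem_Icc] at hs ⊢; omega)
      (fun h hh => by simp only [mem_Icc] at hh ⊢; omega)
      (fun s hs => by simp only [mem_Icc] at hs; omega)
      (fun h hh => by simp only [mem_Icc] at hh; omega)
      (fun s hs => by simp only [mem_Icc] at hs; rw [Nat.sub_sub_self (by omega)])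
  rw [sum_Icc_succ_top hk, Nat.sub_self, hc0, mul_one, hreflect, hF (j + 1) hk,
    Nat.add_sub_cancel, add_sub_cancel]

theorem eq_of_newton_recursion [DivisionRing 𝕜] [CharZero 𝕜] [Module 𝕜 A] {F E c : ℕ → A}
    (hc0 : c 0 = 1)
    (hF : ∀ k, 1 ≤ k → F k = (k : 𝕜) • c k - ∑ h ∈ Icc 1 (k - 1), F (k - h) * c h)
    (hE0 : E 0 = 1)
    (hE : ∀ k, 1 ≤ k → E k = (k : 𝕜)⁻¹ • ∑ s ∈ Icc 1 k, F s * E (k - s)) (k : ℕ) :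
    E k = c k := by
  induction k using Nat.strong_induction_on with
  | _ k ih =>
    rcases Nat.eq_zero_or_pos k with rfl | hk
    · rw [hE0, hc0]
    have hsum : ∑ s ∈ Icc 1 k, F s * E (k - s) = ∑ s ∈ Icc 1 k, F s * c (k - s) :=
      sum_congr rfl fun s hs => by
        rw [ih (k - s) (by simp only [mem_Icc] at hs; omega)]
    rw [hE k hk, hsum, sum_Icc_mul_eq_of_eq_sub_sum hc0 hF hk,
      inv_smul_smul₀ (Nat.cast_ne_zero.mpr hk.ne')]

end NewtonRecursion

/-- With `F_{(k)}` defined by the recursion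
`F_{(k)} = k (R L^k J)/k! − ∑_{h=1}^{k-1} F_{(k-h)} (R L^h J)/h!` (`R J = I`) and
`E_{(k)}` by `E_{(0)} = I`, `E_{(k)} = (1/k) ∑_{s=1}^k F_{(s)} E_{(k-s)}`, the
truncated exponential series satisfies
`∑_{k=0}^N (t^k/k!) R L^k J = ∑_{k=0}^N t^k E_{(k)}` for all `t`. -/
theorem taylor_coefficients_matched (n m N : ℕ)
    (L : Matrix (Fin n) (Fin n) ℂ) (R : Matrix (Fin m) (Fin n) ℂ)
    (J : Matrix (Fin n) (Fin m) ℂ) (hRJ : R * J = 1)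
    (F E : ℕ → Matrix (Fin m) (Fin m) ℂ)
    (hF : ∀ k, 1 ≤ k →
      F k = (k : ℂ) • ((k.factorial : ℂ))⁻¹ • (R * L ^ k * J) -
        ∑ h ∈ Finset.Icc 1 (k - 1), F (k - h) * (((h.factorial : ℂ))⁻¹ • (R * L ^ h * J)))
    (hE0 : E 0 = 1)
    (hE : ∀ k, 1 ≤ k →
      E k = ((k : ℂ))⁻¹ • ∑ s ∈ Finset.Icc 1 k, F s * E (k - s)) :
    ∀ t : ℝ,
      ∑ k ∈ Finset.range (N + 1), ((t : ℂ) ^ k / (k.factorial : ℂ)) • (R * L ^ k * J) =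
      ∑ k ∈ Finset.range (N + 1), ((t : ℂ) ^ k) • E k := by
  have hc0 : ((Nat.factorial 0 : ℂ))⁻¹ • (R * L ^ 0 * J) = 1 := by simp [hRJ]
  have hEc := eq_of_newton_recursion hc0 hF hE0 hE
  intro t
  refine sum_congr rfl fun k _ => ?_
  rw [hEc k, smul_smul, div_eq_mul_inv]
end
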